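/- Let φ* : [0,T_g] → ℝᵐ be a continuous control trajectory each of whose m coordinate functions is Lipschitz continuous with constant α ≥ 0, let Δt > 0, let u*(t) = φ*(⌊t/Δt⌋·Δt) be its step-function approximation, and let u : [0,T_g] → ℝᵐ satisfy sup_{t ∈ [0,T_g]} ‖u(t) − u*(t)‖₁ ≤ ε. Let γ_{φ*} and γ_u be the state-space paths induced by φ* and u from the same initial state x₀, and let D : ℝⁿ → ℝ be Lipschitz continuous with constant L_D ≥ 0. Then |D(γ_{φ*}(t)) − D(γ_u(t))| ≤ L_D·(ε + m·α·Δt)·(exp(L_p·t) − 1) ≤ L_D·(ε + m·α·Δt)·(exp(L_p·T_g) − 1) for every t ∈ [0,T_g]. -/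

import Mathlib

/-!
The step approximation `u*` samples `φ*` at a time at most `Δt` earlier, so each coordinate of
`φ*(t) - u*(t)` is at most `αΔt` and, in the `ℓ¹` norm, `‖φ*(t) - u(t)‖ ≤ ε + mαΔt =: C`.
The difference `e = γ_{φ*} - γ_u` then satisfies `e(0) = 0` and `‖ė‖ ≤ L_p ‖e‖ + L_p C`, and
Grönwall's inequality gives `‖e(t)‖ ≤ C (exp (L_p t) - 1)`; composing with the `L_D`-Lipschitz
cost `D` yields the first bound, and monotonicity of `exp` the second.
-/

open Real Set

lemma PiLp.norm_L1_le_card_mul {ι : Type*} [Fintype ι] {β : ι → Type*}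
    [∀ i, SeminormedAddCommGroup (β i)] {x : PiLp 1 β} {c : ℝ} (h : ∀ i, ‖x i‖ ≤ c) :
    ‖x‖ ≤ Fintype.card ι * c := by
  rw [PiLp.norm_eq_of_L1, ← nsmul_eq_mul]
  exact Finset.sum_le_card_nsmul _ _ _ fun i _ => h i

lemma norm_sub_comp_floor_div_mul_le {ι : Type*} [Fintype ι]
    {φ : ℝ → PiLp 1 (fun _ : ι => ℝ)} {T α Δt : ℝ} (hα : 0 ≤ α) (hΔt : 0 < Δt)
    (hφ : ∀ i, ∀ s ∈ Icc (0:ℝ) T, ∀ t ∈ Icc (0:ℝ) T, |φ t i - φ s i| ≤ α * |t - s|)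
    {t : ℝ} (ht : t ∈ Icc 0 T) :
    ‖φ t - φ (⌊t / Δt⌋ * Δt)‖ ≤ Fintype.card ι * α * Δt := by
  have hlag_nonneg := Int.sub_floor_div_mul_nonneg t hΔt
  have hlag_lt := Int.sub_floor_div_mul_lt t hΔt
  have hs : (⌊t / Δt⌋ : ℝ) * Δt ∈ Icc 0 T := by
    refine ⟨?_, by linarith [ht.2]⟩
    have : (0 : ℝ) ≤ ⌊t / Δt⌋ := mod_cast Int.floor_nonneg.2 (div_nonneg ht.1 hΔt.le)
    positivity
  rw [mul_assoc]
  refine PiLp.norm_L1_le_card_mul fun i => ?_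
  calc ‖(φ t - φ (⌊t / Δt⌋ * Δt)) i‖ = |φ t i - φ (⌊t / Δt⌋ * Δt) i| := rfl
    _ ≤ α * |t - ⌊t / Δt⌋ * Δt| := hφ i _ hs t ht
    _ ≤ α * Δt := by
      rw [abs_of_nonneg hlag_nonneg]
      gcongr

lemma norm_sub_le_of_hasDerivAt_of_controls_close {E U : Type*} [NormedAddCommGroup E]
    [NormedSpace ℝ E] [SeminormedAddCommGroup U] {f : E → U → ℝ → E} {L T C : ℝ} (hL : 0 < L)
    (hf : ∀ x y u v, ∀ t ∈ Icc (0:ℝ) T, ‖f x u t - f y v t‖ ≤ L * (‖x - y‖ + ‖u - v‖))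
    {u₁ u₂ : ℝ → U} (hu : ∀ t ∈ Icc (0:ℝ) T, ‖u₁ t - u₂ t‖ ≤ C) {γ₁ γ₂ : ℝ → E}
    (h₀ : γ₁ 0 = γ₂ 0)
    (hγ₁ : ∀ t ∈ Icc (0:ℝ) T, HasDerivAt γ₁ (f (γ₁ t) (u₁ t) t) t)
    (hγ₂ : ∀ t ∈ Icc (0:ℝ) T, HasDerivAt γ₂ (f (γ₂ t) (u₂ t) t) t) :
    ∀ t ∈ Icc (0:ℝ) T, ‖γ₁ t - γ₂ t‖ ≤ C * (exp (L * t) - 1) := by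
  have hderiv : ∀ t ∈ Icc (0:ℝ) T,
      HasDerivAt (fun t => γ₁ t - γ₂ t) (f (γ₁ t) (u₁ t) t - f (γ₂ t) (u₂ t) t) t :=
    fun t ht => (hγ₁ t ht).sub (hγ₂ t ht)
  have hbound : ∀ t ∈ Ico (0:ℝ) T,
      ‖f (γ₁ t) (u₁ t) t - f (γ₂ t) (u₂ t) t‖ ≤ L * ‖γ₁ t - γ₂ t‖ + L * C := fun t ht =>
    calc _ ≤ L * (‖γ₁ t - γ₂ t‖ + ‖u₁ t - u₂ t‖) := hf _ _ _ _ t (Ico_subset_Icc_self ht)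
      _ ≤ L * (‖γ₁ t - γ₂ t‖ + C) := by grw [hu t (Ico_subset_Icc_self ht)]
      _ = L * ‖γ₁ t - γ₂ t‖ + L * C := mul_add _ _ _
  intro t ht
  calc ‖γ₁ t - γ₂ t‖ ≤ gronwallBound 0 L (L * C) (t - 0) :=
        norm_le_gronwallBound_of_norm_deriv_right_le
          (fun t ht => (hderiv t ht).continuousAt.continuousWithinAt)
          (fun t ht => (hderiv t (Ico_subset_Icc_self ht)).hasDerivWithinAt)
          (by simp [h₀]) hbound t ht
    _ = C * (exp (L * t) - 1) := by
      simp only [gronwallBound_of_K_ne_0 hL.ne', sub_zero, zero_mul, zero_add,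
        mul_div_cancel_left₀ _ hL.ne']

theorem stmt_5_general (n m : ℕ) (Lp Tg α Δt ε LD : ℝ) (hLp : 0 < Lp)
    (hα : 0 ≤ α) (hΔt : 0 < Δt) (hε : 0 ≤ ε) (hLD : 0 ≤ LD)
    (f : PiLp 1 (fun _ : Fin n => ℝ) → PiLp 1 (fun _ : Fin m => ℝ) → ℝ →
      PiLp 1 (fun _ : Fin n => ℝ))
    (hf : ∀ x y u v, ∀ t ∈ Icc (0:ℝ) Tg,
      ‖f x u t - f y v t‖ ≤ Lp * (‖x - y‖ + ‖u - v‖))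
    (φs us u : ℝ → PiLp 1 (fun _ : Fin m => ℝ))
    (hφsLip : ∀ i : Fin m, ∀ s ∈ Icc (0:ℝ) Tg, ∀ t ∈ Icc (0:ℝ) Tg,
      |φs t i - φs s i| ≤ α * |t - s|)
    (hus : ∀ t, us t = φs ((⌊t / Δt⌋ : ℝ) * Δt))
    (hclose : ∀ t ∈ Icc (0:ℝ) Tg, ‖u t - us t‖ ≤ ε)
    (x₀ : PiLp 1 (fun _ : Fin n => ℝ))
    (γφs γu : ℝ → PiLp 1 (fun _ : Fin n => ℝ))
    (hγφs0 : γφs 0 = x₀) (hγu0 : γu 0 = x₀)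
    (hγφs : ∀ t ∈ Icc (0:ℝ) Tg, HasDerivAt γφs (f (γφs t) (φs t) t) t)
    (hγu : ∀ t ∈ Icc (0:ℝ) Tg, HasDerivAt γu (f (γu t) (u t) t) t)
    (D : PiLp 1 (fun _ : Fin n => ℝ) → ℝ)
    (hD : ∀ x y, |D x - D y| ≤ LD * ‖x - y‖) :
    ∀ t ∈ Icc (0:ℝ) Tg,
      |D (γφs t) - D (γu t)| ≤ LD * (ε + m * α * Δt) * (Real.exp (Lp * t) - 1) ∧
      LD * (ε + m * α * Δt) * (Real.exp (Lp * t) - 1) ≤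
        LD * (ε + m * α * Δt) * (Real.exp (Lp * Tg) - 1) := by
  have hcontrols : ∀ t ∈ Icc (0:ℝ) Tg, ‖φs t - u t‖ ≤ ε + m * α * Δt := fun t ht => by
    have hstep := norm_sub_comp_floor_div_mul_le hα hΔt hφsLip ht
    rw [Fintype.card_fin, ← hus] at hstep
    calc ‖φs t - u t‖ ≤ ‖φs t - us t‖ + ‖us t - u t‖ := norm_sub_le_norm_sub_add_norm_sub _ _ _
      _ ≤ m * α * Δt + ε := add_le_add hstep (norm_sub_rev (u t) (us t) ▸ hclose t ht)
      _ = ε + m * α * Δt := add_comm _ _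
  have hpaths := norm_sub_le_of_hasDerivAt_of_controls_close hLp hf hcontrols
    (hγφs0.trans hγu0.symm) hγφs hγu
  intro t ht
  constructor
  · calc |D (γφs t) - D (γu t)| ≤ LD * ‖γφs t - γu t‖ := hD _ _
      _ ≤ LD * ((ε + m * α * Δt) * (exp (Lp * t) - 1)) := by gcongr; exact hpaths t ht
      _ = LD * (ε + m * α * Δt) * (exp (Lp * t) - 1) := (mul_assoc _ _ _).symm
  · gcongr
    exact ht.2

/-- Lemma 3 of the paper: with `u*` the `Δt` step-function approximation of the
(coordinatewise `α`-Lipschitz) optimal trajectory `φ*`, `u` an `ε`-close trajectory,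
`γ_{φ*}`, `γ_u` the induced state-space paths and `D` an `L_D`-Lipschitz cost,
`|D(γ_{φ*}(t)) − D(γ_u(t))| ≤ L_D (ε + mαΔt)(e^{L_p t} − 1) ≤ L_D (ε + mαΔt)(e^{L_p T_g} − 1)`. -/
theorem stmt_5 (n m : ℕ) (Lp Tg α Δt ε LD : ℝ) (hLp : 0 < Lp) (hTg : 0 < Tg)
    (hα : 0 ≤ α) (hΔt : 0 < Δt) (hε : 0 ≤ ε) (hLD : 0 ≤ LD)
    (f : PiLp 1 (fun _ : Fin n => ℝ) → PiLp 1 (fun _ : Fin m => ℝ) → ℝ →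
      PiLp 1 (fun _ : Fin n => ℝ))
    (hf : ∀ x y u v, ∀ t ∈ Icc (0:ℝ) Tg,
      ‖f x u t - f y v t‖ ≤ Lp * (‖x - y‖ + ‖u - v‖))
    (φs us u : ℝ → PiLp 1 (fun _ : Fin m => ℝ))
    (hφs : ContinuousOn φs (Icc 0 Tg))
    (hφsLip : ∀ i : Fin m, ∀ s ∈ Icc (0:ℝ) Tg, ∀ t ∈ Icc (0:ℝ) Tg,
      |φs t i - φs s i| ≤ α * |t - s|)
    (hus : ∀ t, us t = φs ((⌊t / Δt⌋ : ℝ) * Δt))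
    (hclose : ∀ t ∈ Icc (0:ℝ) Tg, ‖u t - us t‖ ≤ ε)
    (x₀ : PiLp 1 (fun _ : Fin n => ℝ))
    (γφs γu : ℝ → PiLp 1 (fun _ : Fin n => ℝ))
    (hγφs0 : γφs 0 = x₀) (hγu0 : γu 0 = x₀)
    (hγφs : ∀ t ∈ Icc (0:ℝ) Tg, HasDerivAt γφs (f (γφs t) (φs t) t) t)
    (hγu : ∀ t ∈ Icc (0:ℝ) Tg, HasDerivAt γu (f (γu t) (u t) t) t)
    (D : PiLp 1 (fun _ : Fin n => ℝ) → ℝ)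
    (hD : ∀ x y, |D x - D y| ≤ LD * ‖x - y‖) :
    ∀ t ∈ Icc (0:ℝ) Tg,
      |D (γφs t) - D (γu t)| ≤ LD * (ε + m * α * Δt) * (Real.exp (Lp * t) - 1) ∧
      LD * (ε + m * α * Δt) * (Real.exp (Lp * t) - 1) ≤
        LD * (ε + m * α * Δt) * (Real.exp (Lp * Tg) - 1) :=
  stmt_5_general n m Lp Tg α Δt ε LD hLp hα hΔt hε hLD f hf φs us u hφsLip hus hclose x₀ γφs γu
    hγφs0 hγu0 hγφs hγu D hD
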